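/- For every β ∈ (0, π/4), the function H(β) = 2·arccos(√2·sin β) − √2·arccos(tan β) is differentiable at β with derivative H′(β) = √2·(1 − 2·cos²β)/(cos β·√(1 − 2·sin²β)); in particular H′(β) < 0 on (0, π/4). -/

import Mathlib

/-!
Both terms are differentiated by the chain rule. Since `1 - tan² β = (1 - 2 sin² β) / cos² β`,
the two derivatives share the factor `1 / (cos β * √(1 - 2 sin² β))`, and the sign comes from
`1 - 2 cos² β = -cos (2β) < 0` for `|β| < π/4`.
-/

namespace Real

theorem one_sub_tan_sq {x : ℝ} (hx : cos x ≠ 0) :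
    1 - tan x ^ 2 = (1 - 2 * sin x ^ 2) / cos x ^ 2 := by
  rw [tan_eq_sin_div_cos, eq_div_iff (pow_ne_zero 2 hx), sub_mul, div_pow,
    div_mul_cancel₀ _ (pow_ne_zero 2 hx)]
  linear_combination sin_sq_add_cos_sq x

theorem one_sub_two_mul_sin_sq_pos {x : ℝ} (hx : |x| < π / 4) : 0 < 1 - 2 * sin x ^ 2 := by
  obtain ⟨hlo, hhi⟩ := abs_lt.mp hx
  have h : 1 - 2 * sin x ^ 2 = cos (2 * x) := by rw [cos_two_mul', cos_sq']; ring
  rw [h]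
  exact cos_pos_of_mem_Ioo ⟨by linarith, by linarith⟩

theorem hasDerivAt_arccos_mul_sin (a x : ℝ) (h₁ : a * sin x ≠ -1) (h₂ : a * sin x ≠ 1) :
    HasDerivAt (fun b => arccos (a * sin b))
      (-(a * cos x) / √(1 - (a * sin x) ^ 2)) x := by
  refine ((hasDerivAt_arccos h₁ h₂).comp x ((hasDerivAt_sin x).const_mul a)).congr_deriv ?_
  ring

theorem hasDerivAt_arccos_tan {x : ℝ} (hcos : 0 < cos x) (h₁ : tan x ≠ -1) (h₂ : tan x ≠ 1) :
    HasDerivAt (fun b => arccos (tan b)) (-1 / (cos x * √(1 - 2 * sin x ^ 2))) x := by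
  refine ((hasDerivAt_arccos h₁ h₂).comp x (hasDerivAt_tan hcos.ne')).congr_deriv ?_
  rw [one_sub_tan_sq hcos.ne', sqrt_div' _ (sq_nonneg _), sqrt_sq hcos.le]
  field_simp

end Real

open Real

/-- For `β ∈ (0, π/4)`, the function `H(β) = 2·arccos(√2·sin β) − √2·arccos(tan β)`
has derivative `√2·(1 − 2cos²β)/(cos β·√(1 − 2sin²β))` at `β`, and this
derivative is negative. -/
theorem stmt15 (β : ℝ) (hβ : β ∈ Set.Ioo 0 (π / 4)) :
    HasDerivAt (fun b : ℝ => 2 * Real.arccos (Real.sqrt 2 * Real.sin b)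
        - Real.sqrt 2 * Real.arccos (Real.tan b))
      (Real.sqrt 2 * (1 - 2 * Real.cos β ^ 2)
        / (Real.cos β * Real.sqrt (1 - 2 * Real.sin β ^ 2))) β ∧
    Real.sqrt 2 * (1 - 2 * Real.cos β ^ 2)
        / (Real.cos β * Real.sqrt (1 - 2 * Real.sin β ^ 2)) < 0 := by
  obtain ⟨hβ0, hβ4⟩ := hβ
  have hcos : 0 < cos β := cos_pos_of_mem_Ioo ⟨by linarith [pi_pos], by linarith⟩
  have hD : 0 < 1 - 2 * sin β ^ 2 :=
    one_sub_two_mul_sin_sq_pos (abs_lt.mpr ⟨by linarith [pi_pos], hβ4⟩)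
  have hsin_sq : (√2 * sin β) ^ 2 = 2 * sin β ^ 2 := by rw [mul_pow, sq_sqrt zero_le_two]
  have hcos_sq : 1 - 2 * cos β ^ 2 = -(1 - 2 * sin β ^ 2) := by rw [cos_sq']; ring
  have htan_sq : tan β ^ 2 < 1 := sub_pos.mp (by rw [one_sub_tan_sq hcos.ne']; positivity)
  have hsin_sq_lt : (√2 * sin β) ^ 2 < 1 := by linarith
  obtain ⟨hsin₁, hsin₂⟩ := abs_lt.mp ((sq_lt_one_iff_abs_lt_one _).mp hsin_sq_lt)
  obtain ⟨htan₁, htan₂⟩ := abs_lt.mp ((sq_lt_one_iff_abs_lt_one _).mp htan_sq)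
  refine ⟨?_, div_neg_of_neg_of_pos ?_ (by positivity)⟩
  · refine ((hasDerivAt_arccos_mul_sin √2 β hsin₁.ne' hsin₂.ne).const_mul 2 |>.sub
      ((hasDerivAt_arccos_tan hcos htan₁.ne' htan₂.ne).const_mul √2)).congr_deriv ?_
    rw [hsin_sq]
    field_simp
    ring
  · rw [hcos_sq]
    exact mul_neg_of_pos_of_neg (by positivity) (neg_neg_of_pos hD)
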